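/- arXiv:2408.00288 — 7 statements merged into one kernel-verified Lean document; each statement's English description precedes it below -/
import Mathlib

section
/- Let E be a complete real inner product space and let g1, g2 ∈ E with g2 ≠ 0. Define g̃1 = g1 - δ(⟪g1,g2⟫ < 0)·(⟪g1,g2⟫/‖g2‖²)·g2. Then g̃1 is the unique minimizer of the function x ↦ ‖g1 - x‖ over the feasible set K = {x ∈ E : ⟪x,g1⟫ ≥ 0 and ⟪x,g2⟫ ≥ 0}; that is, g̃1 ∈ K, and for every x ∈ K one has ‖g1 - g̃1‖ ≤ ‖g1 - x‖, with equality only if x = g̃1. -/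
open scoped RealInnerProductSpace

/-!
`g̃1` is a KKT point of the projection problem: `g1 - g̃1 = t • g2` with `t ≤ 0` and
`t * ⟪g̃1, g2⟫ = 0`. This gives the variational inequality `⟪g1 - g̃1, x - g̃1⟫ ≤ 0` on `K`,
hence `‖g1 - g̃1‖² + ‖x - g̃1‖² ≤ ‖g1 - x‖²`, which is both minimality and uniqueness.
Feasibility for the first constraint is `⟪g̃1, g1⟫ = ‖g̃1‖²`, again by complementary slackness.
-/

section

variable {E : Type*} [NormedAddCommGroup E] [InnerProductSpace ℝ E]

theorem norm_sub_sq_add_norm_sub_sq_le_of_inner_nonpos {g p x : E}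
    (h : ⟪g - p, x - p⟫ ≤ 0) : ‖g - p‖ ^ 2 + ‖x - p‖ ^ 2 ≤ ‖g - x‖ ^ 2 := by
  have hsplit : g - x = (g - p) - (x - p) := by abel
  rw [hsplit, norm_sub_sq_real (g - p)]
  linarith

theorem norm_sub_le_and_eq_imp_of_inner_nonpos {g p x : E} (h : ⟪g - p, x - p⟫ ≤ 0) :
    ‖g - p‖ ≤ ‖g - x‖ ∧ (‖g - p‖ = ‖g - x‖ → x = p) := by
  have hle := norm_sub_sq_add_norm_sub_sq_le_of_inner_nonpos h
  refine ⟨?_, fun heq => ?_⟩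
  · exact pow_le_pow_iff_left₀ (norm_nonneg _) (norm_nonneg _) two_ne_zero |>.mp
      (by linarith [sq_nonneg ‖x - p‖])
  · rw [heq] at hle
    have hxp : ‖x - p‖ ^ 2 = 0 := le_antisymm (by linarith) (sq_nonneg _)
    exact sub_eq_zero.mp (norm_eq_zero.mp (pow_eq_zero_iff two_ne_zero |>.mp hxp))

theorem inner_sub_nonpos_of_sub_eq_smul {g p a x : E} {t : ℝ} (hgp : g - p = t • a)
    (hslack : t * ⟪p, a⟫ = 0) (ht : t ≤ 0) (hx : 0 ≤ ⟪x, a⟫) :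
    ⟪g - p, x - p⟫ ≤ 0 := by
  rw [hgp, real_inner_smul_left, inner_sub_right, real_inner_comm x a, real_inner_comm p a,
    mul_sub, hslack, sub_zero]
  exact mul_nonpos_of_nonpos_of_nonneg ht hx

theorem inner_eq_norm_sq_of_sub_eq_smul {g p a : E} {t : ℝ} (hgp : g - p = t • a)
    (hslack : t * ⟪p, a⟫ = 0) : ⟪p, g⟫ = ‖p‖ ^ 2 := by
  rw [eq_add_of_sub_eq' hgp, inner_add_right, real_inner_smul_right, hslack, add_zero,
    real_inner_self_eq_norm_sq]

/-- The Lagrange multiplier of the constraint `0 ≤ ⟪x, a⟫` at the GH-harmonized point. -/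
noncomputable def harmonizedCoeff (g a : E) : ℝ :=
  (if ⟪g, a⟫ < 0 then 1 else 0) * (⟪g, a⟫ / ‖a‖ ^ 2)

theorem harmonizedCoeff_nonpos (g a : E) : harmonizedCoeff g a ≤ 0 := by
  unfold harmonizedCoeff
  split_ifs with h
  · rw [one_mul]
    exact div_nonpos_of_nonpos_of_nonneg h.le (sq_nonneg _)
  · rw [zero_mul]

theorem inner_sub_harmonizedCoeff_smul_nonneg_and_mul_eq_zero (g a : E) :
    0 ≤ ⟪g - harmonizedCoeff g a • a, a⟫ ∧
      harmonizedCoeff g a * ⟪g - harmonizedCoeff g a • a, a⟫ = 0 := by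
  unfold harmonizedCoeff
  split_ifs with h
  · have ha : ‖a‖ ^ 2 ≠ 0 := by
      rintro hnorm
      rw [sq_eq_zero_iff, norm_eq_zero] at hnorm
      simp [hnorm] at h
    have horth : ⟪g - (⟪g, a⟫ / ‖a‖ ^ 2) • a, a⟫ = 0 := by
      rw [inner_sub_left, real_inner_smul_left, real_inner_self_eq_norm_sq,
        div_mul_cancel₀ _ ha, sub_self]
    rw [one_mul, horth, mul_zero]
    exact ⟨le_rfl, rfl⟩
  · simpa using not_lt.mp h

end

theorem gh_lemma1_general {E : Type*} [NormedAddCommGroup E] [InnerProductSpace ℝ E]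
    (g1 g2 : E)
    (K : Set E) (hK : K = {x : E | 0 ≤ ⟪x, g1⟫ ∧ 0 ≤ ⟪x, g2⟫})
    (g1t : E)
    (hg1t : g1t = g1 - ((if ⟪g1, g2⟫ < 0 then (1 : ℝ) else 0) * (⟪g1, g2⟫ / ‖g2‖ ^ 2)) • g2) :
    g1t ∈ K ∧ ∀ x ∈ K, ‖g1 - g1t‖ ≤ ‖g1 - x‖ ∧ (‖g1 - g1t‖ = ‖g1 - x‖ → x = g1t) := by
  change g1t = g1 - harmonizedCoeff g1 g2 • g2 at hg1t
  have hgp : g1 - g1t = harmonizedCoeff g1 g2 • g2 := by rw [hg1t, sub_sub_cancel]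
  obtain ⟨hfeas, hslack⟩ := hg1t ▸ inner_sub_harmonizedCoeff_smul_nonneg_and_mul_eq_zero g1 g2
  subst hK
  refine ⟨⟨?_, hfeas⟩, fun x hx => ?_⟩
  · rw [inner_eq_norm_sq_of_sub_eq_smul hgp hslack]
    exact sq_nonneg _
  · exact norm_sub_le_and_eq_imp_of_inner_nonpos
      (inner_sub_nonpos_of_sub_eq_smul hgp hslack (harmonizedCoeff_nonpos g1 g2) hx.2)

/-- **Lemma 1 (GH).** In a complete real inner product space, with `g2 ≠ 0`, the
GH-harmonized gradient `g̃1 = g1 - δ(⟪g1,g2⟫ < 0) * (⟪g1,g2⟫/‖g2‖²) • g2` is the unique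
minimizer of `x ↦ ‖g1 - x‖` over `K = {x | ⟪x,g1⟫ ≥ 0 ∧ ⟪x,g2⟫ ≥ 0}`. -/
theorem gh_lemma1 {E : Type*} [NormedAddCommGroup E] [InnerProductSpace ℝ E] [CompleteSpace E]
    (g1 g2 : E) (hg2 : g2 ≠ 0)
    (K : Set E) (hK : K = {x : E | 0 ≤ ⟪x, g1⟫ ∧ 0 ≤ ⟪x, g2⟫})
    (g1t : E)
    (hg1t : g1t = g1 - ((if ⟪g1, g2⟫ < 0 then (1 : ℝ) else 0) * (⟪g1, g2⟫ / ‖g2‖ ^ 2)) • g2) :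
    g1t ∈ K ∧ ∀ x ∈ K, ‖g1 - g1t‖ ≤ ‖g1 - x‖ ∧ (‖g1 - g1t‖ = ‖g1 - x‖ → x = g1t) :=
  gh_lemma1_general g1 g2 K hK g1t hg1t
end

section
/- Let E be a real inner product space and let g1, g2 ∈ E be nonzero vectors with ⟪g1,g2⟫ < 0 and ⟪g1,g2⟫² < ‖g1‖²·‖g2‖² (i.e., g1 and g2 are not antiparallel). Define g̃1 = g1 - (⟪g1,g2⟫/‖g2‖²)·g2 and g̃2 = g2 - (⟪g1,g2⟫/‖g1‖²)·g1. Then ⟪g̃1, g̃2⟫ > 0; that is, GH turns a conflicting (obtuse) pair of gradients into a positively correlated (acute) pair. -/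
open scoped RealInnerProductSpace

/-! With `c = ⟪g1, g2⟫`, `a = ‖g1‖²`, `b = ‖g2‖²`, expanding the inner product gives
`⟪g̃1, g̃2⟫ = c (c² - a b) / (a b)`. In the conflict case both factors of the numerator are
negative, the second by strict Cauchy–Schwarz, which also makes `a b` positive. -/

/-- The identity holds also when `x` or `y` vanishes, since then both sides are `0`. -/
theorem real_inner_sub_div_smul_sub_div_smul {E : Type*} [NormedAddCommGroup E]
    [InnerProductSpace ℝ E] (x y : E) :
    ⟪x - (⟪x, y⟫ / ‖y‖ ^ 2) • y, y - (⟪x, y⟫ / ‖x‖ ^ 2) • x⟫ =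
      ⟪x, y⟫ * (⟪x, y⟫ ^ 2 - ‖x‖ ^ 2 * ‖y‖ ^ 2) / (‖x‖ ^ 2 * ‖y‖ ^ 2) := by
  rcases eq_or_ne x 0 with rfl | hx
  · simp
  rcases eq_or_ne y 0 with rfl | hy
  · simp
  simp only [inner_sub_left, inner_sub_right, real_inner_smul_left, real_inner_smul_right,
    real_inner_self_eq_norm_sq, real_inner_comm x y]
  field_simp
  ring

theorem gh_harmonized_pos_inner_general {E : Type*} [NormedAddCommGroup E] [InnerProductSpace ℝ E]
    (g1 g2 : E) (hconf : ⟪g1, g2⟫ < 0)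
    (hstrict : ⟪g1, g2⟫ ^ 2 < ‖g1‖ ^ 2 * ‖g2‖ ^ 2)
    (g1t g2t : E)
    (hg1t : g1t = g1 - (⟪g1, g2⟫ / ‖g2‖ ^ 2) • g2)
    (hg2t : g2t = g2 - (⟪g1, g2⟫ / ‖g1‖ ^ 2) • g1) :
    0 < ⟪g1t, g2t⟫ := by
  rw [hg1t, hg2t, real_inner_sub_div_smul_sub_div_smul]
  exact div_pos (mul_pos_of_neg_of_neg hconf (sub_neg.2 hstrict))
    ((sq_nonneg _).trans_lt hstrict)

/-- Central claim of Gradient Harmonization: for nonzero, non-antiparallel `g1, g2` in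
conflict (`⟪g1,g2⟫ < 0` and `⟪g1,g2⟫² < ‖g1‖²*‖g2‖²`), the harmonized gradients
`g̃1 = g1 - (⟪g1,g2⟫/‖g2‖²) • g2` and `g̃2 = g2 - (⟪g1,g2⟫/‖g1‖²) • g1` are
positively correlated: `⟪g̃1, g̃2⟫ > 0`. -/
theorem gh_harmonized_pos_inner {E : Type*} [NormedAddCommGroup E] [InnerProductSpace ℝ E]
    (g1 g2 : E) (hg1 : g1 ≠ 0) (hg2 : g2 ≠ 0) (hconf : ⟪g1, g2⟫ < 0)
    (hstrict : ⟪g1, g2⟫ ^ 2 < ‖g1‖ ^ 2 * ‖g2‖ ^ 2)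
    (g1t g2t : E)
    (hg1t : g1t = g1 - (⟪g1, g2⟫ / ‖g2‖ ^ 2) • g2)
    (hg2t : g2t = g2 - (⟪g1, g2⟫ / ‖g1‖ ^ 2) • g1) :
    0 < ⟪g1t, g2t⟫ :=
  gh_harmonized_pos_inner_general g1 g2 hconf hstrict g1t g2t hg1t hg2t
end

section
/- Let E be a real inner product space and let g1, g2 ∈ E be linearly independent vectors with ⟪g1,g2⟫ < 0. Define g̃1 = g1 - (⟪g1,g2⟫/‖g2‖²)·g2 and g̃2 = g2 - (⟪g1,g2⟫/‖g1‖²)·g1, and let angle(u,v) = arccos(⟪u,v⟫/(‖u‖·‖v‖)) for nonzero u, v. Then angle(g̃1, g̃2) = π - angle(g1, g2). -/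
open scoped RealInnerProductSpace

/-- Observation 2 in "Essence and Insights of GH": for linearly independent `g1, g2` in
conflict (`⟪g1,g2⟫ < 0`), the harmonized gradients `g̃1 = g1 - (⟪g1,g2⟫/‖g2‖²) • g2` and
`g̃2 = g2 - (⟪g1,g2⟫/‖g1‖²) • g1` satisfy `angle(g̃1, g̃2) = π - angle(g1, g2)`,
where `angle(u,v) = arccos (⟪u,v⟫ / (‖u‖ * ‖v‖))`. -/
theorem gh_harmonized_angle_flip {E : Type*} [NormedAddCommGroup E] [InnerProductSpace ℝ E]
    (g1 g2 : E) (hli : LinearIndependent ℝ ![g1, g2]) (hconf : ⟪g1, g2⟫ < 0)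
    (g1t g2t : E)
    (hg1t : g1t = g1 - (⟪g1, g2⟫ / ‖g2‖ ^ 2) • g2)
    (hg2t : g2t = g2 - (⟪g1, g2⟫ / ‖g1‖ ^ 2) • g1) :
    Real.arccos (⟪g1t, g2t⟫ / (‖g1t‖ * ‖g2t‖)) =
      Real.pi - Real.arccos (⟪g1, g2⟫ / (‖g1‖ * ‖g2‖)) := by
  have h1 : g1 ≠ 0 := by
    have := hli.ne_zero 0; simpa using this
  have h2 : g2 ≠ 0 := by
    have := hli.ne_zero 1; simpa using this
  set c : ℝ := ⟪g1, g2⟫ with hc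
  have hn1 : (0:ℝ) < ‖g1‖ := norm_pos_iff.mpr h1
  have hn2 : (0:ℝ) < ‖g2‖ := norm_pos_iff.mpr h2
  -- strict Cauchy-Schwarz
  have hcs : -c < ‖g1‖ * ‖g2‖ := by
    have hne : ‖g2‖ • (-g1) ≠ ‖-g1‖ • g2 := by
      intro h
      have hz : ‖g2‖ • g1 + ‖g1‖ • g2 = 0 := by
        rw [norm_neg] at h
        have : -(‖g2‖ • g1) = ‖g1‖ • g2 := by simpa [smul_neg] using h
        rw [← this]; abel
      have := (LinearIndependent.pair_iff.mp hli) (‖g2‖) (‖g1‖) hz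
      exact hn2.ne' this.1
    have := inner_lt_norm_mul_iff_real.mpr hne
    simpa [inner_neg_left] using this
  have hc2 : c ^ 2 < (‖g1‖ * ‖g2‖) ^ 2 := by
    have h0 : (0:ℝ) ≤ -c := le_of_lt (by linarith)
    calc c ^ 2 = (-c) ^ 2 := by ring
      _ < (‖g1‖ * ‖g2‖) ^ 2 := by
          apply pow_lt_pow_left₀ hcs h0
          norm_num
  have hD : ‖g1‖ ^ 2 * ‖g2‖ ^ 2 - c ^ 2 > 0 := by nlinarith
  have hsym : ⟪g2, g1⟫ = c := real_inner_comm g1 g2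
  have hinner : ⟪g1t, g2t⟫ = c * (c ^ 2 - ‖g1‖ ^ 2 * ‖g2‖ ^ 2) / (‖g1‖ ^ 2 * ‖g2‖ ^ 2) := by
    rw [hg1t, hg2t]
    simp only [inner_sub_left, inner_sub_right, inner_smul_left, inner_smul_right,
      real_inner_self_eq_norm_sq, RCLike.conj_to_real, ← hc, hsym]
    field_simp
    ring
  have hnorm1 : ‖g1t‖ ^ 2 = (‖g1‖ ^ 2 * ‖g2‖ ^ 2 - c ^ 2) / ‖g2‖ ^ 2 := by
    rw [← real_inner_self_eq_norm_sq, hg1t]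
    simp only [inner_sub_left, inner_sub_right, inner_smul_left, inner_smul_right,
      real_inner_self_eq_norm_sq, RCLike.conj_to_real, ← hc, hsym]
    field_simp
    ring
  have hnorm2 : ‖g2t‖ ^ 2 = (‖g1‖ ^ 2 * ‖g2‖ ^ 2 - c ^ 2) / ‖g1‖ ^ 2 := by
    rw [← real_inner_self_eq_norm_sq, hg2t]
    simp only [inner_sub_left, inner_sub_right, inner_smul_left, inner_smul_right,
      real_inner_self_eq_norm_sq, RCLike.conj_to_real, ← hc, hsym]
    field_simp
    ring
  have hprod : ‖g1t‖ * ‖g2t‖ = (‖g1‖ ^ 2 * ‖g2‖ ^ 2 - c ^ 2) / (‖g1‖ * ‖g2‖) := by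
    have hsq : (‖g1t‖ * ‖g2t‖) ^ 2 = ((‖g1‖ ^ 2 * ‖g2‖ ^ 2 - c ^ 2) / (‖g1‖ * ‖g2‖)) ^ 2 := by
      rw [mul_pow, hnorm1, hnorm2]
      field_simp
    have h0 : (0:ℝ) ≤ ‖g1t‖ * ‖g2t‖ := by positivity
    have h0' : (0:ℝ) ≤ (‖g1‖ ^ 2 * ‖g2‖ ^ 2 - c ^ 2) / (‖g1‖ * ‖g2‖) := by positivity
    nlinarith [hsq, h0, h0']
  have hkey : ⟪g1t, g2t⟫ / (‖g1t‖ * ‖g2t‖) = -(c / (‖g1‖ * ‖g2‖)) := by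
    rw [hinner, hprod, div_div_div_eq]
    rw [div_eq_iff (by positivity)]
    field_simp
    ring
  rw [hkey, Real.arccos_neg]
end

section
/- Let E be a real inner product space and let g1, g2 ∈ E be linearly independent vectors with ⟪g1,g2⟫ < 0. Define g̃1 = g1 - (⟪g1,g2⟫/‖g2‖²)·g2, and let angle(u,v) = arccos(⟪u,v⟫/(‖u‖·‖v‖)) for nonzero u, v. Then angle(g1, g̃1) = angle(g1, g2) - π/2; that is, the harmonized gradient deviates from the original gradient by exactly θ − π/2, where θ is the (obtuse) angle between g1 and g2. -/
open scoped RealInnerProductSpace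

/-- Gradient-deviation claim of GH (motivation for GH++): for linearly independent
`g1, g2` in conflict (`⟪g1,g2⟫ < 0`), the harmonized gradient
`g̃1 = g1 - (⟪g1,g2⟫/‖g2‖²) • g2` deviates from `g1` by exactly `θ - π/2`, where
`θ = angle(g1,g2)` and `angle(u,v) = arccos (⟪u,v⟫ / (‖u‖ * ‖v‖))`. -/
theorem gh_harmonized_deviation {E : Type*} [NormedAddCommGroup E] [InnerProductSpace ℝ E]
    (g1 g2 : E) (hli : LinearIndependent ℝ ![g1, g2]) (hconf : ⟪g1, g2⟫ < 0)
    (g1t : E) (hg1t : g1t = g1 - (⟪g1, g2⟫ / ‖g2‖ ^ 2) • g2) :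
    Real.arccos (⟪g1, g1t⟫ / (‖g1‖ * ‖g1t‖)) =
      Real.arccos (⟪g1, g2⟫ / (‖g1‖ * ‖g2‖)) - Real.pi / 2 := by
  obtain ⟨hg2, hnd⟩ := linearIndependent_fin2.mp hli
  simp only [Matrix.cons_val_one, Matrix.head_cons, Matrix.cons_val_zero] at hg2 hnd
  have hg1 : g1 ≠ 0 := fun h => hnd 0 (by simp [h])
  have hn1 : (0:ℝ) < ‖g1‖ := norm_pos_iff.mpr hg1
  have hn2 : (0:ℝ) < ‖g2‖ := norm_pos_iff.mpr hg2
  set a := ⟪g1, g2⟫ with ha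
  -- strict Cauchy-Schwarz
  have hcs : -a < ‖g1‖ * ‖g2‖ := by
    have h := inner_lt_norm_mul_iff_real (F := E) (x := g1) (y := -g2)
    have hne : ‖-g2‖ • g1 ≠ ‖g1‖ • (-g2) := by
      intro h'
      rw [norm_neg, smul_neg] at h'
      apply hnd (-(‖g1‖ / ‖g2‖))
      have h2 := congrArg (fun v => (‖g2‖⁻¹ : ℝ) • v) h'
      simp only [smul_smul, smul_neg] at h2
      rw [inv_mul_cancel₀ hn2.ne', one_smul] at h2
      conv_rhs => rw [h2]
      rw [← neg_smul]
      congr 1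
      rw [div_eq_inv_mul]
    have := h.mpr hne
    simpa [inner_neg_right] using this
  have hsq : a ^ 2 < ‖g1‖ ^ 2 * ‖g2‖ ^ 2 := by nlinarith [mul_pos hn1 hn2]
  set s : ℝ := ‖g1‖ ^ 2 - a ^ 2 / ‖g2‖ ^ 2 with hs
  have hspos : 0 < s := by
    rw [hs, sub_pos, div_lt_iff₀ (by positivity)]
    linarith
  have h22 : ⟪g2, g2⟫ = ‖g2‖ ^ 2 := real_inner_self_eq_norm_sq g2
  have h11 : ⟪g1, g1⟫ = ‖g1‖ ^ 2 := real_inner_self_eq_norm_sq g1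
  have h21 : ⟪g2, g1⟫ = a := (real_inner_comm g2 g1).symm
  have hinner : ⟪g1, g1t⟫ = s := by
    rw [hg1t, inner_sub_right, real_inner_smul_right, h11, ← ha, hs]
    ring
  have hnorm : ‖g1t‖ ^ 2 = s := by
    rw [← real_inner_self_eq_norm_sq, hg1t]
    simp only [inner_sub_left, inner_sub_right, real_inner_smul_left, real_inner_smul_right,
      h22, h11, h21, ← ha]
    rw [hs]
    field_simp
    ring
  have hnt : ‖g1t‖ = Real.sqrt s := by
    rw [← hnorm, Real.sqrt_sq (norm_nonneg _)]
  set c : ℝ := a / (‖g1‖ * ‖g2‖) with hc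
  have hc1 : -1 < c := by
    rw [hc, lt_div_iff₀ (by positivity)]
    linarith
  have hc0 : c < 0 := div_neg_of_neg_of_pos hconf (by positivity)
  have harc : Real.pi / 2 < Real.arccos c :=
    not_le.mp (fun h => absurd (Real.arccos_le_pi_div_two.mp h) (not_le.mpr hc0))
  have harcpi : Real.arccos c < Real.pi :=
    lt_of_le_of_ne (Real.arccos_le_pi c)
      (fun h => absurd (Real.arccos_eq_pi.mp h) (not_le.mpr hc1))
  have hratio : ⟪g1, g1t⟫ / (‖g1‖ * ‖g1t‖) = Real.sqrt s / ‖g1‖ := by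
    rw [hinner, hnt, div_eq_div_iff (by positivity) hn1.ne']
    have hms : Real.sqrt s * Real.sqrt s = s := Real.mul_self_sqrt hspos.le
    linear_combination (-‖g1‖) * hms
  rw [hratio]
  apply Real.injOn_cos
  · exact ⟨Real.arccos_nonneg _, Real.arccos_le_pi _⟩
  · constructor
    · linarith
    · linarith [Real.pi_pos]
  · have hrle : Real.sqrt s / ‖g1‖ ≤ 1 := by
      rw [div_le_one hn1,
        show ‖g1‖ = Real.sqrt (‖g1‖ ^ 2) from (Real.sqrt_sq (norm_nonneg _)).symm]
      apply Real.sqrt_le_sqrt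
      have : 0 ≤ a ^ 2 / ‖g2‖ ^ 2 := by positivity
      rw [hs]; linarith
    have hr0 : (0:ℝ) ≤ Real.sqrt s / ‖g1‖ := by positivity
    rw [Real.cos_arccos (by linarith) hrle, Real.cos_sub_pi_div_two, Real.sin_arccos]
    have h1c : 1 - c ^ 2 = s / ‖g1‖ ^ 2 := by
      rw [hc, hs]; field_simp
    rw [h1c, Real.sqrt_div hspos.le, Real.sqrt_sq (norm_nonneg _)]
end

section
/- Let E be a real inner product space and let g1, g2 ∈ E be nonzero vectors. Define the GH-aggregated gradient g̃ = g1 + g2 - δ(⟪g1,g2⟫ < 0)·(⟪g1,g2⟫/‖g2‖²)·g2 - δ(⟪g1,g2⟫ < 0)·(⟪g1,g2⟫/‖g1‖²)·g1. Then ⟪g̃, g1⟫ ≥ 0 and ⟪g̃, g2⟫ ≥ 0; that is, the overall harmonized gradient is a non-ascent direction for neither task—it forms a non-obtuse angle with both original task gradients. -/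
open scoped RealInnerProductSpace

/-!
Write `rej u v = u - (⟪u, v⟫ / ‖v‖²) • v` for the component of `u` orthogonal to `v`. In the
conflicting case `⟪g1, g2⟫ < 0` the aggregated gradient is `rej g1 g2 + rej g2 g1`. Pairing with
`g1`, the second summand contributes `0`, and the first contributes `‖rej g1 g2‖² ≥ 0` because
`g1` differs from `rej g1 g2` by a multiple of `g2`. Otherwise it is `g1 + g2`, whose pairing with
`g1` is `‖g1‖² + ⟪g1, g2⟫ ≥ 0`. The statement is symmetric in `g1, g2`.
-/

section

variable {E : Type*} [NormedAddCommGroup E] [InnerProductSpace ℝ E]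

noncomputable def orthogonalRejection (u v : E) : E :=
  u - (⟪u, v⟫ / ‖v‖ ^ 2) • v

theorem inner_orthogonalRejection_right (u v : E) : ⟪orthogonalRejection u v, v⟫ = 0 := by
  rcases eq_or_ne v 0 with rfl | hv
  · simp
  have hv2 : ‖v‖ ^ 2 ≠ 0 := by positivity
  rw [orthogonalRejection, inner_sub_left, real_inner_smul_left, real_inner_self_eq_norm_sq,
    div_mul_cancel₀ _ hv2, sub_self]

theorem inner_orthogonalRejection_self_nonneg (u v : E) :
    0 ≤ ⟪orthogonalRejection u v, u⟫ := by
  have hu : u = orthogonalRejection u v + (⟪u, v⟫ / ‖v‖ ^ 2) • v := by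
    rw [orthogonalRejection, sub_add_cancel]
  calc 0 ≤ ‖orthogonalRejection u v‖ ^ 2 := by positivity
    _ = ⟪orthogonalRejection u v, orthogonalRejection u v + (⟪u, v⟫ / ‖v‖ ^ 2) • v⟫ := by
      rw [inner_add_right, real_inner_smul_right, inner_orthogonalRejection_right, mul_zero,
        add_zero, real_inner_self_eq_norm_sq]
    _ = ⟪orthogonalRejection u v, u⟫ := by rw [← hu]

noncomputable def ghAggregate (g1 g2 : E) : E :=
  if ⟪g1, g2⟫ < 0 then orthogonalRejection g1 g2 + orthogonalRejection g2 g1 else g1 + g2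

theorem ghAggregate_comm (g1 g2 : E) : ghAggregate g1 g2 = ghAggregate g2 g1 := by
  simp only [ghAggregate, real_inner_comm g1 g2, add_comm]

theorem inner_ghAggregate_left_nonneg (g1 g2 : E) : 0 ≤ ⟪ghAggregate g1 g2, g1⟫ := by
  unfold ghAggregate
  split_ifs with hc
  · rw [inner_add_left, inner_orthogonalRejection_right, add_zero]
    exact inner_orthogonalRejection_self_nonneg g1 g2
  · rw [inner_add_left, real_inner_self_eq_norm_sq, real_inner_comm]
    have := sq_nonneg ‖g1‖
    linarith

end

theorem gh_aggregated_no_conflict_general {E : Type*} [NormedAddCommGroup E] [InnerProductSpace ℝ E]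
    (g1 g2 : E)
    (gt : E)
    (hgt : gt = g1 + g2 - ((if ⟪g1, g2⟫ < 0 then (1 : ℝ) else 0) * (⟪g1, g2⟫ / ‖g2‖ ^ 2)) • g2
        - ((if ⟪g1, g2⟫ < 0 then (1 : ℝ) else 0) * (⟪g1, g2⟫ / ‖g1‖ ^ 2)) • g1) :
    0 ≤ ⟪gt, g1⟫ ∧ 0 ≤ ⟪gt, g2⟫ := by
  have hgt_eq : gt = ghAggregate g1 g2 := by
    rw [hgt, ghAggregate]
    split_ifs
    · rw [orthogonalRejection, orthogonalRejection, real_inner_comm g2 g1]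
      simp only [one_mul]
      abel
    · simp
  subst hgt_eq
  exact ⟨inner_ghAggregate_left_nonneg g1 g2,
    ghAggregate_comm g1 g2 ▸ inner_ghAggregate_left_nonneg g2 g1⟩

/-- **Theorem 1 (GH).** For nonzero task gradients `g1, g2`, the overall GH-aggregated
gradient `g̃ = g1 + g2 - δ(⟪g1,g2⟫<0)·(⟪g1,g2⟫/‖g2‖²) • g2 - δ(⟪g1,g2⟫<0)·(⟪g1,g2⟫/‖g1‖²) • g1`
forms a non-obtuse angle with both original gradients: `⟪g̃,g1⟫ ≥ 0` and `⟪g̃,g2⟫ ≥ 0`. -/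
theorem gh_aggregated_no_conflict {E : Type*} [NormedAddCommGroup E] [InnerProductSpace ℝ E]
    (g1 g2 : E) (hg1 : g1 ≠ 0) (hg2 : g2 ≠ 0)
    (gt : E)
    (hgt : gt = g1 + g2 - ((if ⟪g1, g2⟫ < 0 then (1 : ℝ) else 0) * (⟪g1, g2⟫ / ‖g2‖ ^ 2)) • g2
        - ((if ⟪g1, g2⟫ < 0 then (1 : ℝ) else 0) * (⟪g1, g2⟫ / ‖g1‖ ^ 2)) • g1) :
    0 ≤ ⟪gt, g1⟫ ∧ 0 ≤ ⟪gt, g2⟫ :=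
  gh_aggregated_no_conflict_general g1 g2 gt hgt
end

section
/- Let E be a real inner product space and let g1, g2 ∈ E be nonzero vectors. Define the GH-aggregated gradient g̃ = g1 + g2 - δ(⟪g1,g2⟫ < 0)·(⟪g1,g2⟫/‖g2‖²)·g2 - δ(⟪g1,g2⟫ < 0)·(⟪g1,g2⟫/‖g1‖²)·g1, and set τ1 = 1 - δ(⟪g1,g2⟫ < 0)·⟪g1,g2⟫/‖g1‖² and τ2 = 1 - δ(⟪g1,g2⟫ < 0)·⟪g1,g2⟫/‖g2‖². Then g̃ = τ1·g1 + τ2·g2, and moreover τ1 ≥ 1 and τ2 ≥ 1. -/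
open scoped RealInnerProductSpace

/-- Equivalent-model identity of GH: the aggregated harmonized gradient
`g̃ = g1 + g2 - δ(⟪g1,g2⟫<0)·(⟪g1,g2⟫/‖g2‖²) • g2 - δ(⟪g1,g2⟫<0)·(⟪g1,g2⟫/‖g1‖²) • g1`
equals the reweighted gradient `τ1 • g1 + τ2 • g2` with
`τ1 = 1 - δ(⟪g1,g2⟫<0)·⟪g1,g2⟫/‖g1‖²` and `τ2 = 1 - δ(⟪g1,g2⟫<0)·⟪g1,g2⟫/‖g2‖²`,
and moreover `τ1 ≥ 1` and `τ2 ≥ 1`. -/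
theorem gh_equivalent_reweighting {E : Type*} [NormedAddCommGroup E] [InnerProductSpace ℝ E]
    (g1 g2 : E) (hg1 : g1 ≠ 0) (hg2 : g2 ≠ 0)
    (gt : E)
    (hgt : gt = g1 + g2 - ((if ⟪g1, g2⟫ < 0 then (1 : ℝ) else 0) * (⟪g1, g2⟫ / ‖g2‖ ^ 2)) • g2
        - ((if ⟪g1, g2⟫ < 0 then (1 : ℝ) else 0) * (⟪g1, g2⟫ / ‖g1‖ ^ 2)) • g1)
    (τ1 τ2 : ℝ)
    (hτ1 : τ1 = 1 - (if ⟪g1, g2⟫ < 0 then (1 : ℝ) else 0) * ⟪g1, g2⟫ / ‖g1‖ ^ 2)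
    (hτ2 : τ2 = 1 - (if ⟪g1, g2⟫ < 0 then (1 : ℝ) else 0) * ⟪g1, g2⟫ / ‖g2‖ ^ 2) :
    gt = τ1 • g1 + τ2 • g2 ∧ 1 ≤ τ1 ∧ 1 ≤ τ2 := by
  subst hgt hτ1 hτ2
  refine ⟨?_, ?_, ?_⟩
  · split_ifs with h
    · simp only [one_mul]
      rw [sub_smul, sub_smul, one_smul, one_smul]
      abel
    · simp
  · split_ifs with h
    · have : ⟪g1, g2⟫ / ‖g1‖ ^ 2 ≤ 0 :=
        div_nonpos_of_nonpos_of_nonneg (le_of_lt h) (by positivity)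
      rw [one_mul]
      linarith
    · simp
  · split_ifs with h
    · have : ⟪g1, g2⟫ / ‖g2‖ ^ 2 ≤ 0 :=
        div_nonpos_of_nonpos_of_nonneg (le_of_lt h) (by positivity)
      rw [one_mul]
      linarith
    · simp
end

section
/- Let E be a real inner product space and let g1, g2 ∈ E with g2 ≠ 0 and ⟪g1,g2⟫ ≤ 0. Then the pair (α1*, α2*) = (0, -⟪g1,g2⟫/‖g2‖²) maximizes the dual objective (α1, α2) ↦ -½·‖g1 + α1·g1 + α2·g2‖² over all α1 ≥ 0, α2 ≥ 0; that is, α1* ≥ 0, α2* ≥ 0, and for all α1 ≥ 0, α2 ≥ 0 one has ‖g1 + α1*·g1 + α2*·g2‖ ≤ ‖g1 + α1·g1 + α2·g2‖. -/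
open scoped RealInnerProductSpace

/-
Put `β = -⟪g1, g2⟫ / ‖g2‖²`, so that `p = g1 + β • g2` is orthogonal to `g2` (when `g2 = 0` both
sides vanish through `x / 0 = 0`). Then `g1 + α1 • g1 + α2 • g2 = (1 + α1) • p + s • g2` for some
scalar `s`, and by Pythagoras its norm is at least `(1 + α1) ‖p‖ ≥ ‖p‖`.
-/

section

variable {E : Type*} [NormedAddCommGroup E] [InnerProductSpace ℝ E]

theorem norm_le_norm_add_of_inner_eq_zero {x y : E} (h : ⟪x, y⟫ = 0) : ‖x‖ ≤ ‖x + y‖ := by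
  have hsq : ‖x‖ ^ 2 ≤ ‖x + y‖ ^ 2 := by
    rw [norm_add_sq_real, h]
    linarith [sq_nonneg ‖y‖]
  exact (pow_le_pow_iff_left₀ (norm_nonneg _) (norm_nonneg _) two_ne_zero).1 hsq

theorem inner_add_neg_inner_div_norm_sq_smul_self (x y : E) :
    ⟪x + (-⟪x, y⟫ / ‖y‖ ^ 2) • y, y⟫ = 0 := by
  rcases eq_or_ne y 0 with rfl | hy
  · simp
  · have hy' : ‖y‖ ^ 2 ≠ 0 := pow_ne_zero 2 (norm_ne_zero_iff.2 hy)
    rw [inner_add_left, real_inner_smul_left, real_inner_self_eq_norm_sq, div_mul_cancel₀ _ hy',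
      add_neg_cancel]

end

theorem gh_dual_solution_general {E : Type*} [NormedAddCommGroup E] [InnerProductSpace ℝ E]
    (g1 g2 : E) (h : ⟪g1, g2⟫ ≤ 0) :
    (0 : ℝ) ≤ 0 ∧ (0 : ℝ) ≤ -⟪g1, g2⟫ / ‖g2‖ ^ 2 ∧
      ∀ α1 α2 : ℝ, 0 ≤ α1 → 0 ≤ α2 →
        ‖g1 + (0 : ℝ) • g1 + (-⟪g1, g2⟫ / ‖g2‖ ^ 2) • g2‖ ≤ ‖g1 + α1 • g1 + α2 • g2‖ := by
  refine ⟨le_rfl, div_nonneg (neg_nonneg.2 h) (sq_nonneg _), fun α1 α2 hα1 _ => ?_⟩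
  set β := -⟪g1, g2⟫ / ‖g2‖ ^ 2
  set p := g1 + β • g2
  have hp : ⟪(1 + α1) • p, (α2 - (1 + α1) * β) • g2⟫ = 0 := by
    rw [real_inner_smul_left, real_inner_smul_right, inner_add_neg_inner_div_norm_sq_smul_self,
      mul_zero, mul_zero]
  calc ‖g1 + (0 : ℝ) • g1 + β • g2‖ = ‖p‖ := by rw [zero_smul, add_zero]
    _ ≤ (1 + α1) * ‖p‖ := le_mul_of_one_le_left (norm_nonneg _) (by linarith)
    _ = ‖(1 + α1) • p‖ := by rw [norm_smul, Real.norm_of_nonneg (by linarith)]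
    _ ≤ ‖(1 + α1) • p + (α2 - (1 + α1) * β) • g2‖ := norm_le_norm_add_of_inner_eq_zero hp
    _ = ‖g1 + α1 • g1 + α2 • g2‖ := by congr 1; module

/-- Solution of the Lagrange dual problem in the proof of Lemma 1 of GH: for `g2 ≠ 0`
and `⟪g1,g2⟫ ≤ 0`, the pair `(α1*, α2*) = (0, -⟪g1,g2⟫/‖g2‖²)` maximizes the dual
objective `(α1, α2) ↦ -½‖g1 + α1 • g1 + α2 • g2‖²` over `α1 ≥ 0, α2 ≥ 0`. -/
theorem gh_dual_solution {E : Type*} [NormedAddCommGroup E] [InnerProductSpace ℝ E]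
    (g1 g2 : E) (hg2 : g2 ≠ 0) (h : ⟪g1, g2⟫ ≤ 0) :
    (0 : ℝ) ≤ 0 ∧ (0 : ℝ) ≤ -⟪g1, g2⟫ / ‖g2‖ ^ 2 ∧
      ∀ α1 α2 : ℝ, 0 ≤ α1 → 0 ≤ α2 →
        ‖g1 + (0 : ℝ) • g1 + (-⟪g1, g2⟫ / ‖g2‖ ^ 2) • g2‖ ≤ ‖g1 + α1 • g1 + α2 • g2‖ :=
  gh_dual_solution_general g1 g2 h
end
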